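/- arXiv:2605.24766 — 2 statements merged into one kernel-verified Lean document; each statement's English description precedes it below -/
import Mathlib

section
/- Let f : X → ℝ ∪ {+∞} be proper with x̄ ∈ argmin f, and let γ > 0. Then x̄ is a sharp minimizer of f with modulus γ if and only if x̄ is a sharp minimizer of the biconjugate f** with modulus γ. -/
/-- The Legendre–Fenchel conjugate `f*(ξ) = sup_x {⟨ξ,x⟩ − f x}`. -/
noncomputable def fenchelConj {X : Type*} [NormedAddCommGroup X] [NormedSpace ℝ X]
    (f : X → EReal) (ξ : X →L[ℝ] ℝ) : EReal :=
  ⨆ x : X, ((ξ x : ℝ) : EReal) - f x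

/-- The biconjugate `f**(x) = sup_{ξ ∈ X*} {⟨ξ,x⟩ − f*(ξ)}`. -/
noncomputable def fenchelBiconj {X : Type*} [NormedAddCommGroup X] [NormedSpace ℝ X]
    (f : X → EReal) (x : X) : EReal :=
  ⨆ ξ : X →L[ℝ] ℝ, ((ξ x : ℝ) : EReal) - fenchelConj f ξ

/-!
Always `f** ≤ f`, and testing the zero functional gives `f** ≥ inf f = f x̄`; hence
`f** x̄ = f x̄`, which yields sharpness of `f` from that of `f**`. Conversely, given `x`, take by
Hahn–Banach `ξ` with `‖ξ‖ ≤ γ` and `ξ (x - x̄) = γ‖x - x̄‖`. Sharpness of `f` gives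
`f* ξ ≤ ξ x̄ - f x̄`, so `f** x ≥ ξ x - f* ξ ≥ f x̄ + γ‖x - x̄‖`.
-/

lemma EReal.coe_sub_le_comm (a : ℝ) (b c : EReal) :
    (a : EReal) - b ≤ c ↔ (a : EReal) - c ≤ b := by
  induction b <;> induction c <;> simp [← EReal.coe_sub, add_comm]

lemma exists_norm_le_apply_eq_mul_norm {E : Type*} [NormedAddCommGroup E] [NormedSpace ℝ E]
    (v : E) {γ : ℝ} (hγ : 0 ≤ γ) : ∃ ξ : E →L[ℝ] ℝ, ‖ξ‖ ≤ γ ∧ ξ v = γ * ‖v‖ := by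
  obtain ⟨g, hg, hgv⟩ := exists_dual_vector'' ℝ v
  refine ⟨γ • g, ?_, by simp [hgv]⟩
  rw [norm_smul, Real.norm_of_nonneg hγ]
  exact mul_le_of_le_one_right hγ hg

section

variable {X : Type*} [NormedAddCommGroup X] [NormedSpace ℝ X]

def IsSharpMin (g : X → EReal) (xbar : X) (γ : ℝ) : Prop :=
  ∀ x, g xbar + ((γ * ‖x - xbar‖ : ℝ) : EReal) ≤ g x

lemma le_fenchelConj (f : X → EReal) (ξ : X →L[ℝ] ℝ) (x : X) :
    ((ξ x : ℝ) : EReal) - f x ≤ fenchelConj f ξ :=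
  le_iSup (fun y => ((ξ y : ℝ) : EReal) - f y) x

lemma le_fenchelBiconj (f : X → EReal) (ξ : X →L[ℝ] ℝ) (x : X) :
    ((ξ x : ℝ) : EReal) - fenchelConj f ξ ≤ fenchelBiconj f x :=
  le_iSup (fun η : X →L[ℝ] ℝ => ((η x : ℝ) : EReal) - fenchelConj f η) ξ

lemma fenchelBiconj_le (f : X → EReal) (x : X) : fenchelBiconj f x ≤ f x :=
  iSup_le fun ξ => (EReal.coe_sub_le_comm _ _ _).1 (le_fenchelConj f ξ x)

lemma le_fenchelBiconj_of_forall_le {f : X → EReal} {xbar : X} (hmin : ∀ y, f xbar ≤ f y)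
    (x : X) : f xbar ≤ fenchelBiconj f x := by
  have hconj : fenchelConj f 0 ≤ -f xbar := iSup_le fun y => by simpa using hmin y
  calc f xbar = (((0 : X →L[ℝ] ℝ) x : ℝ) : EReal) - -f xbar := by simp
    _ ≤ (((0 : X →L[ℝ] ℝ) x : ℝ) : EReal) - fenchelConj f 0 := EReal.sub_le_sub le_rfl hconj
    _ ≤ fenchelBiconj f x := le_fenchelBiconj f 0 x

lemma fenchelConj_le_of_sharp {f : X → EReal} {xbar : X} {r γ : ℝ}
    (hsharp : ∀ y, ((r + γ * ‖y - xbar‖ : ℝ) : EReal) ≤ f y) {ξ : X →L[ℝ] ℝ} (hξ : ‖ξ‖ ≤ γ) :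
    fenchelConj f ξ ≤ ((ξ xbar - r : ℝ) : EReal) := by
  refine iSup_le fun y => ?_
  have hξy : ξ y - ξ xbar ≤ γ * ‖y - xbar‖ := by
    rw [← map_sub]
    exact (le_abs_self _).trans <| (ξ.le_opNorm _).trans (by gcongr)
  calc ((ξ y : ℝ) : EReal) - f y ≤ ((ξ y : ℝ) : EReal) - ((r + γ * ‖y - xbar‖ : ℝ) : EReal) :=
        EReal.sub_le_sub le_rfl (hsharp y)
    _ ≤ ((ξ xbar - r : ℝ) : EReal) := by
        rw [← EReal.coe_sub, EReal.coe_le_coe_iff]; linarith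

lemma IsSharpMin.to_fenchelBiconj {f : X → EReal} {xbar : X} {r γ : ℝ} (hr : f xbar = r)
    (hγ : 0 ≤ γ) (h : IsSharpMin f xbar γ) : IsSharpMin (fenchelBiconj f) xbar γ := by
  intro x
  obtain ⟨ξ, hξ, hξx⟩ := exists_norm_le_apply_eq_mul_norm (x - xbar) hγ
  have hconj : fenchelConj f ξ ≤ ((ξ xbar - r : ℝ) : EReal) :=
    fenchelConj_le_of_sharp (fun y => by simpa [hr] using h y) hξ
  calc fenchelBiconj f xbar + ((γ * ‖x - xbar‖ : ℝ) : EReal)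
      ≤ ((r + γ * ‖x - xbar‖ : ℝ) : EReal) := by
        rw [EReal.coe_add, ← hr]; gcongr; exact fenchelBiconj_le f xbar
    _ = ((ξ x : ℝ) : EReal) - ((ξ xbar - r : ℝ) : EReal) := by
        rw [← EReal.coe_sub, ← hξx, map_sub]; ring_nf
    _ ≤ ((ξ x : ℝ) : EReal) - fenchelConj f ξ := EReal.sub_le_sub le_rfl hconj
    _ ≤ fenchelBiconj f x := le_fenchelBiconj f ξ x

lemma IsSharpMin.of_fenchelBiconj {f : X → EReal} {xbar : X} {γ : ℝ} (hmin : ∀ y, f xbar ≤ f y)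
    (h : IsSharpMin (fenchelBiconj f) xbar γ) : IsSharpMin f xbar γ := by
  intro x
  rw [← (fenchelBiconj_le f xbar).antisymm (le_fenchelBiconj_of_forall_le hmin xbar)]
  exact (h x).trans (fenchelBiconj_le f x)

end

/-- sharp minimality with modulus γ is preserved under biconjugation. -/
theorem sharp_min_iff_sharp_min_biconj
    {X : Type*} [NormedAddCommGroup X] [NormedSpace ℝ X]
    (f : X → EReal) (hbot : ∀ x, f x ≠ ⊥) (hproper : ∃ x, f x ≠ ⊤)
    (xbar : X) (hmin : ∀ y : X, f xbar ≤ f y) (γ : ℝ) (hγ : 0 < γ) :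
    (∀ x : X, f xbar + ((γ * ‖x - xbar‖ : ℝ) : EReal) ≤ f x)
      ↔ (∀ x : X, fenchelBiconj f xbar + ((γ * ‖x - xbar‖ : ℝ) : EReal)
            ≤ fenchelBiconj f x) := by
  obtain ⟨x₀, hx₀⟩ := hproper
  have hfin : f xbar ≠ ⊤ := ne_top_of_le_ne_top hx₀ (hmin x₀)
  obtain ⟨r, hr⟩ : ∃ r : ℝ, f xbar = r := ⟨_, (EReal.coe_toReal hfin (hbot xbar)).symm⟩
  exact ⟨IsSharpMin.to_fenchelBiconj hr hγ.le, IsSharpMin.of_fenchelBiconj hmin⟩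
end

section
/- In a complete metric space (M, d), with J : M → ℝ ∪ {+∞} proper, lower semicontinuous, bounded below, and ū a minimizer of J: the existence of δ ∈ (0, +∞] such that every Lipschitz perturbation ζ with Lip ζ < γ yields argmin(J + ζ) ∩ B(ū, δ) ⊆ {ū} is equivalent to the existence of δ′ ∈ (0, +∞] such that J(u) ≥ J(ū) + γ·d(u, ū) for all u ∈ B(ū, δ′). -/
/-!
A γ-sharp minimum is stable: if `u` minimizes `J + ζ` with `Lip ζ = K < γ`, then
`γ d(u, ū) ≤ J u - J ū ≤ ζ ū - ζ u ≤ K d(u, ū)`, so `u = ū`.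

Conversely, if sharpness fails at some `u` close to `ū`, then `J u - J ū < κ d(u, ū)` for some
`κ < γ`. Ekeland's variational principle started at `u` with slope `κ` yields a point `v` with
`J v + κ d(v, u) ≤ J u`, hence `d(v, u) < d(u, ū)` (so `v ≠ ū` and `v` is still close to `ū`), at
which `J + κ d(·, v)` is minimal. The `κ`-Lipschitz perturbation `κ d(·, v)` thus has a minimizer
other than `ū` near `ū`, contradicting stability.
-/

open Metric Set Filter Topology

theorem Metric.exists_iInter_eq_singleton_of_antitone {X : Type*} [MetricSpace X] [CompleteSpace X]
    {T : ℕ → Set X} (hanti : Antitone T) (hclosed : ∀ n, IsClosed (T n))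
    (hne : ∀ n, (T n).Nonempty) (hbdd : ∀ n, Bornology.IsBounded (T n))
    (hdiam : Tendsto (fun n => diam (T n)) atTop (𝓝 0)) :
    ∃ v, ⋂ n, T n = {v} := by
  obtain ⟨v, hv⟩ := nonempty_iInter_of_nonempty_biInter hclosed hbdd
    (fun N => (hne N).mono (subset_iInter₂ fun _ hn => hanti hn)) hdiam
  refine ⟨v, eq_singleton_iff_unique_mem.2 ⟨hv, fun w hw => ?_⟩⟩
  rw [mem_iInter] at hv hw
  exact dist_le_zero.1 (ge_of_tendsto' hdiam fun n => dist_le_diam_of_mem (hbdd n) (hw n) (hv n))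

section EkelandSet

variable {X : Type*} [PseudoMetricSpace X] {g : X → ℝ} {κ : ℝ}

def ekelandSet (g : X → ℝ) (κ : ℝ) (x : X) : Set X :=
  {w | g w + κ * dist w x ≤ g x}

theorem self_mem_ekelandSet (g : X → ℝ) (κ : ℝ) (x : X) : x ∈ ekelandSet g κ x := by
  simp [ekelandSet]

theorem ekelandSet_subset (hκ : 0 ≤ κ) {x w : X} (hw : w ∈ ekelandSet g κ x) :
    ekelandSet g κ w ⊆ ekelandSet g κ x := fun z (hz : g z + κ * dist z w ≤ g w) => by
  have hw : g w + κ * dist w x ≤ g x := hw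
  show g z + κ * dist z x ≤ g x
  linarith [mul_le_mul_of_nonneg_left (dist_triangle z w x) hκ]

theorem LowerSemicontinuous.isClosed_ekelandSet (hg : LowerSemicontinuous g) (κ : ℝ) (x : X) :
    IsClosed (ekelandSet g κ x) :=
  (hg.add (by fun_prop : Continuous fun w => κ * dist w x).lowerSemicontinuous).isClosed_preimage
    (g x)

theorem exists_ekelandSet_subset_closedBall (hbdd : BddBelow (range g)) (hκ : 0 < κ) (x : X)
    {r : ℝ} (hr : 0 < r) : ∃ w ∈ ekelandSet g κ x, ekelandSet g κ w ⊆ closedBall w r := by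
  set m := sInf (g '' ekelandSet g κ x)
  -- `w` minimizes `g` on `ekelandSet g κ x` up to `κ * r`.
  obtain ⟨_, ⟨w, hw, rfl⟩, hwm⟩ := exists_lt_of_csInf_lt
    ((nonempty_of_mem (self_mem_ekelandSet g κ x)).image g) (lt_add_of_pos_right m (mul_pos hκ hr))
  refine ⟨w, hw, fun z hz => ?_⟩
  have hmz : m ≤ g z :=
    csInf_le (hbdd.mono (image_subset_range _ _)) ⟨z, ekelandSet_subset hκ.le hw hz, rfl⟩
  have hz : g z + κ * dist z w ≤ g w := hz
  rw [mem_closedBall, ← mul_le_mul_iff_right₀ hκ]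
  linarith

end EkelandSet

theorem LowerSemicontinuous.exists_ekeland {X : Type*} [MetricSpace X] [CompleteSpace X]
    {g : X → ℝ} (hg : LowerSemicontinuous g) (hbdd : BddBelow (range g)) {κ : ℝ} (hκ : 0 < κ)
    (x₀ : X) : ∃ v, g v + κ * dist v x₀ ≤ g x₀ ∧ ∀ w, g v ≤ g w + κ * dist w v := by
  choose next hnext_mem hnext_ball using fun (n : ℕ) x =>
    exists_ekelandSet_subset_closedBall hbdd hκ x (Nat.one_div_pos_of_nat (n := n))
  -- `x 0 = x₀` and `x (n + 1) = next n (x n)`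
  let x : ℕ → X := fun n => Nat.rec x₀ next n
  let T n := ekelandSet g κ (x (n + 1))
  have hball n : T n ⊆ closedBall (x (n + 1)) (1 / (n + 1)) := hnext_ball n (x n)
  have hdiam : Tendsto (fun n => diam (T n)) atTop (𝓝 0) := by
    refine squeeze_zero (fun _ => diam_nonneg) (fun n => (diam_mono (hball n)
      isBounded_closedBall).trans (diam_closedBall (by positivity))) ?_
    simpa using tendsto_one_div_add_atTop_nhds_zero_nat.const_mul (2 : ℝ)
  obtain ⟨v, hv⟩ := exists_iInter_eq_singleton_of_antitone (T := T)
    (antitone_nat_of_succ_le fun n => ekelandSet_subset hκ.le (hnext_mem _ _))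
    (fun n => hg.isClosed_ekelandSet κ _) (fun n => ⟨_, self_mem_ekelandSet g κ _⟩)
    (fun n => isBounded_closedBall.subset (hball n)) hdiam
  have hvT : ∀ n, v ∈ T n := mem_iInter.1 (hv ▸ mem_singleton v)
  refine ⟨v, ekelandSet_subset hκ.le (hnext_mem 0 x₀) (hvT 0), fun w => ?_⟩
  by_contra! hw
  have hwT : w ∈ ⋂ n, T n := mem_iInter.2 fun n => ekelandSet_subset hκ.le (hvT n) hw.le
  rw [hv, mem_singleton_iff] at hwT
  rw [hwT, dist_self, mul_zero, add_zero] at hw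
  exact lt_irrefl _ hw

theorem LowerSemicontinuous.exists_ekeland_ereal {M : Type*} [MetricSpace M] [CompleteSpace M]
    {f : M → EReal} (hf : LowerSemicontinuous f) {c : ℝ} (hc : ∀ u, (c : EReal) ≤ f u)
    {κ : ℝ} (hκ : 0 < κ) {x₀ : M} (hx₀ : f x₀ ≠ ⊤) :
    ∃ v, f v + (κ * dist v x₀ : ℝ) ≤ f x₀ ∧ ∀ w, f v ≤ f w + (κ * dist w v : ℝ) := by
  let A := {w | f w ≤ f x₀}
  have : CompleteSpace A := (hf.isClosed_preimage (f x₀)).isComplete.completeSpace_coe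
  have hfin : ∀ w ∈ A, ((f w).toReal : EReal) = f w := fun w hw =>
    EReal.coe_toReal (ne_top_of_le_ne_top hx₀ hw) (ne_bot_of_le_ne_bot (EReal.coe_ne_bot c) (hc w))
  let g : A → ℝ := fun w => (f w).toReal
  have hg : LowerSemicontinuous g := lowerSemicontinuous_iff_isClosed_preimage.2 fun y => by
    convert (hf.comp continuous_subtype_val).isClosed_preimage (y : EReal) using 1
    ext w
    simp [g, ← EReal.coe_le_coe_iff, hfin w w.2]
  have hg_bdd : BddBelow (range g) := ⟨c, forall_mem_range.2 fun w => by
    simpa [g, ← EReal.coe_le_coe_iff, hfin w w.2] using hc w⟩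
  obtain ⟨v, hv₀, hv⟩ := hg.exists_ekeland hg_bdd hκ ⟨x₀, le_refl (f x₀)⟩
  refine ⟨v, ?_, fun w => ?_⟩
  · rw [← hfin v v.2, ← hfin x₀ (le_refl (f x₀))]
    exact_mod_cast hv₀
  · by_cases hw : w ∈ A
    · rw [← hfin v v.2, ← hfin w hw]
      exact_mod_cast hv ⟨w, hw⟩
    · calc f v ≤ f x₀ := v.2
        _ ≤ f w := le_of_not_ge hw
        _ ≤ f w + (κ * dist w v : ℝ) := le_add_of_nonneg_right (by positivity)

theorem eq_of_sharp_of_add_lipschitz_le {M : Type*} [MetricSpace M] {J : M → EReal} {u ū : M}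
    (hū_top : J ū ≠ ⊤) (hū_bot : J ū ≠ ⊥) {γ : ℝ} (hsharp : J ū + (γ * dist u ū : ℝ) ≤ J u)
    {ζ : M → ℝ} {K : NNReal} (hζ : LipschitzWith K ζ) (hK : (K : ℝ) < γ)
    (hu : J u + (ζ u : EReal) ≤ J ū + (ζ ū : EReal)) : u = ū := by
  obtain ⟨b, hb⟩ : ∃ b : ℝ, (b : EReal) = J ū := ⟨_, EReal.coe_toReal hū_top hū_bot⟩
  rw [← hb] at hsharp hu
  have hchain : b + γ * dist u ū + ζ u ≤ b + ζ ū := by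
    have := (add_le_add hsharp le_rfl).trans hu
    exact_mod_cast this
  have hζ_le := (abs_le.1 (Real.dist_eq _ _ ▸ hζ.dist_le_mul u ū)).1
  have : (γ - K) * dist u ū ≤ 0 := by linarith
  exact dist_le_zero.1 (nonpos_of_mul_nonpos_right this (sub_pos.2 hK))

theorem exists_dist_lt_forall_le_add_dist {M : Type*} [MetricSpace M] [CompleteSpace M]
    {J : M → EReal} (hJ : LowerSemicontinuous J) {c : ℝ} (hc : ∀ u, (c : EReal) ≤ J u) {ū : M}
    (hmin : ∀ v, J ū ≤ J v) {γ : ℝ} {u : M} (hu : J u < J ū + (γ * dist u ū : ℝ)) :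
    ∃ κ < γ, 0 < κ ∧ ∃ v, dist v u < dist u ū ∧ ∀ w, J v ≤ J w + (κ * dist w v : ℝ) := by
  have hne_bot (v : M) : J v ≠ ⊥ := ne_bot_of_le_ne_bot (EReal.coe_ne_bot c) (hc v)
  have hu_top : J u ≠ ⊤ := hu.ne_top
  obtain ⟨a, ha⟩ : ∃ a : ℝ, (a : EReal) = J u := ⟨_, EReal.coe_toReal hu_top (hne_bot u)⟩
  obtain ⟨b, hb⟩ : ∃ b : ℝ, (b : EReal) = J ū :=
    ⟨_, EReal.coe_toReal (ne_top_of_le_ne_top hu_top (hmin u)) (hne_bot ū)⟩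
  have hab : b ≤ a := by exact_mod_cast hb ▸ ha ▸ hmin u
  have hlt : a - b < γ * dist u ū := by
    rw [← ha, ← hb] at hu
    linarith [show a < b + γ * dist u ū by exact_mod_cast hu]
  have hd : 0 < dist u ū :=
    dist_nonneg.lt_of_ne fun h => by rw [← h, mul_zero] at hlt; linarith
  obtain ⟨κ, hκ_lower, hκγ⟩ := exists_between ((div_lt_iff₀ hd).2 hlt)
  have hκ : 0 < κ := (div_nonneg (sub_nonneg.2 hab) hd.le).trans_lt hκ_lower
  obtain ⟨v, hv_desc, hv_min⟩ := hJ.exists_ekeland_ereal hc hκ hu_top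
  refine ⟨κ, hκγ, hκ, v, ?_, hv_min⟩
  have hv : b + κ * dist v u ≤ a := by
    have := (add_le_add (hb ▸ hmin v) le_rfl).trans hv_desc
    rw [← ha] at this
    exact_mod_cast this
  have : κ * dist v u < κ * dist u ū := by linarith [(div_lt_iff₀ hd).1 hκ_lower]
  exact lt_of_mul_lt_mul_left this hκ.le

theorem lipschitz_stability_iff_sharp_local_min_general
    {M : Type*} [MetricSpace M] [CompleteSpace M]
    (J : M → EReal) (hproper : ∃ u, J u ≠ ⊤)
    (hlsc : LowerSemicontinuous J) (hbdd : ∃ c : ℝ, ∀ u, ((c : ℝ) : EReal) ≤ J u)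
    (ubar : M) (hmin : ∀ v : M, J ubar ≤ J v) (γ : ℝ) :
    (∃ δ : ENNReal, 0 < δ ∧
        ∀ (ζ : M → ℝ) (K : NNReal), LipschitzWith K ζ → (K : ℝ) < γ →
          ∀ u ∈ EMetric.closedBall ubar δ,
            (∀ v : M, J u + ((ζ u : ℝ) : EReal) ≤ J v + ((ζ v : ℝ) : EReal)) → u = ubar)
      ↔ (∃ δ' : ENNReal, 0 < δ' ∧
          ∀ u ∈ EMetric.closedBall ubar δ',
            J ubar + ((γ * dist u ubar : ℝ) : EReal) ≤ J u) := by
  obtain ⟨c, hc⟩ := hbdd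
  constructor
  · rintro ⟨δ, hδ, hstable⟩
    refine ⟨δ / 2, ENNReal.half_pos hδ.ne', fun u hu => ?_⟩
    by_contra! hlt
    obtain ⟨κ, hκγ, hκ, v, hvu, hv⟩ := exists_dist_lt_forall_le_add_dist hlsc hc hmin hlt
    have hv_ne : v ≠ ubar := fun h => (h ▸ hvu).ne (dist_comm _ _)
    have hv_mem : edist v ubar ≤ δ := calc
      edist v ubar ≤ edist v u + edist u ubar := edist_triangle _ _ _
      _ ≤ δ / 2 + δ / 2 := by
        refine add_le_add (le_trans ?_ hu) hu
        rw [edist_dist, edist_dist]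
        exact ENNReal.ofReal_le_ofReal hvu.le
      _ = δ := ENNReal.add_halves δ
    refine hv_ne (hstable (fun w => κ * dist w v) ‖κ‖₊ ?_ ?_ v hv_mem fun w => ?_)
    · simpa [Function.comp_def] using (lipschitzWith_smul κ).comp (LipschitzWith.dist_left v)
    · simpa [abs_of_pos hκ] using hκγ
    · simpa using hv w
  · rintro ⟨δ', hδ', hsharp⟩
    obtain ⟨u₀, hu₀⟩ := hproper
    exact ⟨δ', hδ', fun ζ K hζ hK u hu hu_min =>
      eq_of_sharp_of_add_lipschitz_le (ne_top_of_le_ne_top hu₀ (hmin u₀))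
        (ne_bot_of_le_ne_bot (EReal.coe_ne_bot c) (hc ubar)) (hsharp u hu) hζ hK (hu_min ubar)⟩

/-- in a complete metric space, local stability of the minimizer under
Lipschitz perturbations with constant < γ is equivalent to sharp local minimality
with modulus γ (for possibly different radii δ, δ′ ∈ (0,∞]). -/
theorem lipschitz_stability_iff_sharp_local_min
    {M : Type*} [MetricSpace M] [CompleteSpace M]
    (J : M → EReal) (hbot : ∀ u, J u ≠ ⊥) (hproper : ∃ u, J u ≠ ⊤)
    (hlsc : LowerSemicontinuous J) (hbdd : ∃ c : ℝ, ∀ u, ((c : ℝ) : EReal) ≤ J u)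
    (ubar : M) (hmin : ∀ v : M, J ubar ≤ J v) (γ : ℝ) (hγ : 0 < γ) :
    (∃ δ : ENNReal, 0 < δ ∧
        ∀ (ζ : M → ℝ) (K : NNReal), LipschitzWith K ζ → (K : ℝ) < γ →
          ∀ u ∈ EMetric.closedBall ubar δ,
            (∀ v : M, J u + ((ζ u : ℝ) : EReal) ≤ J v + ((ζ v : ℝ) : EReal)) → u = ubar)
      ↔ (∃ δ' : ENNReal, 0 < δ' ∧
          ∀ u ∈ EMetric.closedBall ubar δ',
            J ubar + ((γ * dist u ubar : ℝ) : EReal) ≤ J u) :=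
  lipschitz_stability_iff_sharp_local_min_general J hproper hlsc hbdd ubar hmin γ
end
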